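/- arXiv:cs/0506063 — 2 statements merged into one kernel-verified Lean document; each statement's English description precedes it below -/
import Mathlib

section
/- There exist a finite database, a set of functional dependencies, and an acyclic priority such that some g-repair is not an l-repair. Concretely: for r = {a, b, c, d} with conflict graph edges {a,b}, {a,c}, {a,d}, {b,c}, {b,d} (c and d not conflicting) and priority ≺ = {(c,a),(d,b)}, the set {c,d} is a g-repair but not an l-repair. -/
/-- A relation is acyclic if no element is related to itself by the transitive closure. -/
def Acyclic {α : Type*} (prec : α → α → Prop) : Prop :=
  ∀ x, ¬ Relation.TransGen prec x x

/-- The global preference order on sets of tuples: `X ≪ Y`. -/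
def ll {α : Type*} (prec : α → α → Prop) (X Y : Set α) : Prop :=
  ∀ x ∈ X \ Y, ∃ y ∈ Y \ X, prec x y

/-- Closed neighborhood of `x` in the conflict graph. -/
def nbhd {α : Type*} (conflict : α → α → Prop) (x : α) : Set α :=
  {x} ∪ {y | conflict x y}

/-- The winnow operator: elements of `s` not dominated by any element of `s`. -/
def winnow {α : Type*} (prec : α → α → Prop) (s : Set α) : Set α :=
  {t ∈ s | ¬ ∃ t' ∈ s, prec t t'}

/-- A repair: a maximal subset of `r` containing no conflicting pair. -/
def IsRepair {α : Type*} (r : Set α) (conflict : α → α → Prop) (X : Set α) : Prop :=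
  X ⊆ r ∧ (∀ a ∈ X, ∀ b ∈ X, ¬ conflict a b) ∧
    ∀ y ∈ r, y ∉ X → ∃ a ∈ X, conflict y a

/-- A locally preferred repair: obtainable by iteratively choosing an undominated
tuple and removing it together with its conflict neighborhood. -/
def IsLRepair {α : Type*} (r : Set α) (conflict prec : α → α → Prop) (X : Set α) : Prop :=
  ∃ (n : ℕ) (x : Fin n → α), Function.Injective x ∧ X = Set.range x ∧
    (∀ i : Fin n, x i ∈ winnow prec (r \ {y | ∃ j, j < i ∧ y ∈ nbhd conflict (x j)})) ∧
    winnow prec (r \ {y | ∃ i, y ∈ nbhd conflict (x i)}) = ∅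

/-- A globally preferred repair: a `≪`-maximal repair. -/
def IsGRepair {α : Type*} (r : Set α) (conflict prec : α → α → Prop) (X : Set α) : Prop :=
  IsRepair r conflict X ∧ ∀ Y, IsRepair r conflict Y → ll prec X Y → Y = X

/-!
Both `2` and `3` are dominated in `r`, while an l-repair must start from an element undominated
in all of `r`, so `{2, 3}` is not an l-repair. It is a g-repair: a conflict-free `Y` with
`{2, 3} ≪ Y` missing `2` must contain `0`, the only tuple above `2`; then `3 ∉ Y` since `0` and
`3` conflict, so `Y` contains `1`, the only tuple above `3`, yet `0` and `1` conflict. Missing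
`3` fails in the same way through `1` and `2`. Hence `{2, 3} ⊆ Y`, and maximality of the repair
`{2, 3}` forces `Y = {2, 3}`.
-/

theorem acyclic_of_forall_not_prec_prec {α : Type*} {prec : α → α → Prop}
    (hirr : ∀ x, ¬ prec x x) (hchain : ∀ x y z, prec x y → ¬ prec y z) : Acyclic prec := by
  have transGen_imp : ∀ x y, Relation.TransGen prec x y → prec x y := by
    intro x y h
    induction h with
    | single h => exact h
    | tail _ hbc hab => exact absurd hbc (hchain _ _ _ hab)
  exact fun x hx => hirr x (transGen_imp x x hx)

def IsConflictFree {α : Type*} (conflict : α → α → Prop) (X : Set α) : Prop :=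
  ∀ a ∈ X, ∀ b ∈ X, ¬ conflict a b

section Repairs

variable {α : Type*} {r X Y : Set α} {conflict prec : α → α → Prop}

theorem IsRepair.eq_of_subset (hX : IsRepair r conflict X) (hYr : Y ⊆ r)
    (hY : IsConflictFree conflict Y) (hXY : X ⊆ Y) : Y = X := by
  refine hXY.antisymm' fun y hy => ?_
  by_contra hyX
  obtain ⟨a, haX, hya⟩ := hX.2.2 y (hYr hy) hyX
  exact hY y hy a (hXY haX) hya

theorem isGRepair_of_forall_ll_subset (hX : IsRepair r conflict X)
    (h : ∀ Y, Y ⊆ r → IsConflictFree conflict Y → ll prec X Y → X ⊆ Y) :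
    IsGRepair r conflict prec X :=
  ⟨hX, fun Y hY hll => hX.eq_of_subset hY.1 hY.2.1 (h Y hY.1 hY.2.1 hll)⟩

theorem ll.mem_of_forall_prec_eq {x z : α} (hll : ll prec X Y) (hxX : x ∈ X) (hxY : x ∉ Y)
    (hz : ∀ y, prec x y → y = z) : z ∈ Y := by
  obtain ⟨y, ⟨hyY, -⟩, hxy⟩ := hll x ⟨hxX, hxY⟩
  exact hz y hxy ▸ hyY

theorem IsLRepair.exists_undominated (h : IsLRepair r conflict prec X) (hX : X.Nonempty) :
    ∃ x ∈ X, ∀ y ∈ r, ¬ prec x y := by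
  obtain ⟨n, x, -, rfl, hstep, -⟩ := h
  obtain ⟨-, ⟨i, rfl⟩⟩ := hX
  have hn : 0 < n := i.pos
  obtain ⟨-, hund⟩ := hstep ⟨0, hn⟩
  refine ⟨x ⟨0, hn⟩, ⟨_, rfl⟩, fun y hy hxy => hund ⟨y, ⟨hy, ?_⟩, hxy⟩⟩
  rintro ⟨j, hj, -⟩
  exact Nat.not_lt_zero _ hj

end Repairs

namespace FourTuples

def conflict : Fin 4 → Fin 4 → Prop := fun x y =>
  x ≠ y ∧ ¬ ((x = 2 ∧ y = 3) ∨ (x = 3 ∧ y = 2))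

def prec : Fin 4 → Fin 4 → Prop := fun x y =>
  (x, y) = ((2 : Fin 4), (0 : Fin 4)) ∨ (x, y) = ((3 : Fin 4), (1 : Fin 4))

instance : DecidableRel conflict := fun x y => by unfold conflict; infer_instance

instance : DecidableRel prec := fun x y => by unfold prec; infer_instance

theorem acyclic_prec : Acyclic prec :=
  acyclic_of_forall_not_prec_prec (by decide) (by decide)

theorem isRepair_two_three : IsRepair Set.univ conflict {2, 3} := by
  refine ⟨Set.subset_univ _, ?_, fun y _ hy => ⟨2, Set.mem_insert _ _, ?_⟩⟩
  · simp only [Set.mem_insert_iff, Set.mem_singleton_iff]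
    decide
  · simp only [Set.mem_insert_iff, Set.mem_singleton_iff, not_or] at hy
    revert y
    decide

theorem two_three_subset_of_ll {Y : Set (Fin 4)} (hY : IsConflictFree conflict Y)
    (hll : ll prec {2, 3} Y) : {2, 3} ⊆ Y := by
  have h0 : (2 : Fin 4) ∉ Y → 0 ∈ Y :=
    fun h2 => hll.mem_of_forall_prec_eq (by simp) h2 (by decide)
  have h1 : (3 : Fin 4) ∉ Y → 1 ∈ Y :=
    fun h3 => hll.mem_of_forall_prec_eq (by simp) h3 (by decide)
  have h2 : (2 : Fin 4) ∈ Y := by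
    by_contra h2
    by_cases h3 : (3 : Fin 4) ∈ Y
    · exact hY 0 (h0 h2) 3 h3 (by decide)
    · exact hY 0 (h0 h2) 1 (h1 h3) (by decide)
  have h3 : (3 : Fin 4) ∈ Y := by
    by_contra h3
    exact hY 1 (h1 h3) 2 h2 (by decide)
  exact Set.insert_subset h2 (Set.singleton_subset_iff.2 h3)

end FourTuples

/-- a g-repair need not be an l-repair. On r = {a,b,c,d} (= Fin 4,
a=0, b=1, c=2, d=3) with all pairs conflicting except {c,d}, and priority
≺ = {(c,a),(d,b)}, the set {c,d} is a g-repair but not an l-repair. -/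
theorem grepair_not_lrepair_example :
    let conflict : Fin 4 → Fin 4 → Prop := fun x y =>
      x ≠ y ∧ ¬ ((x = 2 ∧ y = 3) ∨ (x = 3 ∧ y = 2))
    let prec : Fin 4 → Fin 4 → Prop := fun x y =>
      (x, y) = ((2 : Fin 4), (0 : Fin 4)) ∨ (x, y) = ((3 : Fin 4), (1 : Fin 4))
    Acyclic prec ∧
    IsGRepair Set.univ conflict prec {2, 3} ∧
    ¬ IsLRepair Set.univ conflict prec {2, 3} := by
  refine ⟨FourTuples.acyclic_prec,
    isGRepair_of_forall_ll_subset FourTuples.isRepair_two_three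
      fun Y _ hY hll => FourTuples.two_three_subset_of_ll hY hll,
    fun hl => ?_⟩
  obtain ⟨x, hx, hund⟩ := hl.exists_undominated ⟨2, by simp⟩
  rcases hx with rfl | rfl
  · exact hund 0 trivial (by decide)
  · exact hund 1 trivial (by decide)
end

section
/- Monotonicity for l-repairs: if ≺' ⊆ ≺ are acyclic priorities on the conflict graph of a finite set r, then every l-repair with respect to ≺ is an l-repair with respect to ≺'. -/
/-!
Weakening the priority can only enlarge each winnow set, so every choice made in a
construction of `X` for `≺` is still admissible for `≺'`. The construction stops for `≺`
only once no tuple is left, since a nonempty finite set always has `≺`-undominated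
elements when `≺` is acyclic; hence it also stops for `≺'`.
-/

section

variable {α : Type*} {prec prec' : α → α → Prop} {s : Set α}

lemma winnow_subset_winnow (hext : ∀ x y, prec' x y → prec x y) (s : Set α) :
    winnow prec s ⊆ winnow prec' s :=
  fun _ ⟨hts, hundom⟩ => ⟨hts, fun ⟨t', ht', h⟩ => hundom ⟨t', ht', hext _ _ h⟩⟩

lemma winnow_subset (prec : α → α → Prop) (s : Set α) : winnow prec s ⊆ s :=
  Set.sep_subset _ _

lemma Acyclic.winnow_nonempty (hacyc : Acyclic prec) (hs : s.Finite) (hne : s.Nonempty) :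
    (winnow prec s).Nonempty := by
  let _ : IsStrictOrder α (flip (Relation.TransGen prec)) :=
    { irrefl := hacyc, trans := fun _ _ _ hab hbc => hbc.trans hab }
  obtain ⟨t, hts⟩ := hne
  obtain ⟨⟨m, hms⟩, -, hmin⟩ :=
    (hs.wellFoundedOn (r := flip (Relation.TransGen prec))).has_min Set.univ ⟨⟨t, hts⟩, trivial⟩
  exact ⟨m, hms, fun ⟨t', ht's, hmt'⟩ => hmin ⟨t', ht's⟩ trivial (.single hmt')⟩

lemma Acyclic.eq_empty_of_winnow_eq_empty (hacyc : Acyclic prec) (hs : s.Finite)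
    (h : winnow prec s = ∅) : s = ∅ :=
  Set.not_nonempty_iff_eq_empty.1 fun hne =>
    (hacyc.winnow_nonempty hs hne).ne_empty h

end

theorem lrepair_monotone_general {α : Type*} (r : Set α) (hr : r.Finite)
    (conflict prec prec' : α → α → Prop)
    (hacyc : Acyclic prec)
    (hext : ∀ x y, prec' x y → prec x y)
    (X : Set α) (hX : IsLRepair r conflict prec X) :
    IsLRepair r conflict prec' X := by
  obtain ⟨n, x, hinj, hX, hstep, hstop⟩ := hX
  refine ⟨n, x, hinj, hX, fun i => winnow_subset_winnow hext _ (hstep i), ?_⟩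
  have hleft : r \ {y | ∃ i, y ∈ nbhd conflict (x i)} = ∅ :=
    hacyc.eq_empty_of_winnow_eq_empty (hr.subset Set.sdiff_subset) hstop
  exact Set.subset_eq_empty (winnow_subset prec' _) hleft

/-- monotonicity for l-repairs. If ≺' ⊆ ≺ are acyclic priorities,
every l-repair w.r.t. ≺ is an l-repair w.r.t. ≺'. -/
theorem lrepair_monotone {α : Type*} (r : Set α) (hr : r.Finite)
    (conflict prec prec' : α → α → Prop)
    (hsymm : ∀ x y, conflict x y → conflict y x)
    (hsub : ∀ x y, prec x y → conflict x y)
    (hsub' : ∀ x y, prec' x y → conflict x y)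
    (hasymm : ∀ x y, prec x y → ¬ prec y x)
    (hasymm' : ∀ x y, prec' x y → ¬ prec' y x)
    (hacyc : Acyclic prec) (hacyc' : Acyclic prec')
    (hext : ∀ x y, prec' x y → prec x y)
    (X : Set α) (hX : IsLRepair r conflict prec X) :
    IsLRepair r conflict prec' X :=
  lrepair_monotone_general r hr conflict prec prec' hacyc hext X hX
end
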